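/- Let N be the 2n×2n matrix over K defined by N_{k,j} = B^{(2n−1−k) k}_{j (2n−1−j)} for j, k ∈ {0, ..., 2n−1}, i.e. the matrix of the braiding B on its invariant subspace with basis {e_{(j, 2n−1−j)} : 0 ≤ j ≤ 2n−1}. Then Tr N = (n−1)·u⁻¹ − n·u + u^{2n−1} and det N = (−1)^n · u^{2n}. (In the variable q = u² this reads Tr = (n−1)q^{−1/2} − n q^{1/2} + q^{(2n−1)/2} and det = (−1)^n q^n.) -/

import Mathlib

noncomputable section

/-- The coefficient field `K = ℚ(u)`, the field of rational functions in `u`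
over `ℚ` (`u` plays the role of `q^{1/2}`, `q = u²`). -/
abbrev FK : Type := RatFunc ℚ

/-- The variable `u` of `K = ℚ(u)`. -/
def U : FK := RatFunc.X

/-- The fusion matrix `M` of the fundamental `2n`-dimensional representation of
`D_n` (weights indexed by their order `0, …, 2n-1`): `M_{j,k} = 0` if
`k ≠ 2n-1-j`, `M_{j,2n-1-j} = u^{n-1-j}` for `j ≤ n-1`, and
`M_{j,2n-1-j} = u^{n-j}` for `j ≥ n`. -/
def MD (n j k : ℕ) : FK :=
  if j + k + 1 = 2 * n then
    if j < n then U ^ ((n : ℤ) - 1 - j) else U ^ ((n : ℤ) - j)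
  else 0

/-- The wall-crossing coefficients `β_j^k` (`j < k`) of the braiding matrix
of `D_n`: `(u - u⁻¹)u^{k-j}` if `j, k` are both `≤ n-1` or both `≥ n`, and
`(u - u⁻¹)u^{k-j-1} + δ_{j,2n-1-k}(u⁻¹ - u)` otherwise. -/
def betaD (n j k : ℕ) : FK :=
  if (j < n ∧ k < n) ∨ (n ≤ j ∧ n ≤ k) then
    (U - U⁻¹) * U ^ ((k : ℤ) - j)
  else
    (U - U⁻¹) * U ^ ((k : ℤ) - j - 1) +
      (if j + k + 1 = 2 * n then U⁻¹ - U else 0)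

/-- Coefficients of the braiding matrix of `D_n`:
`BD n b d j k = B^{bd}_{jk}`, the coefficient of `e_{(b,d)}` in `B e_{(j,k)}`.
`B e_{(j,j)} = u⁻¹ e_{(j,j)}`; for `j ≠ k` with `j + k ≠ 2n-1`,
`B e_{(j,k)} = e_{(k,j)}` if `j > k` and
`B e_{(j,k)} = e_{(k,j)} + (u⁻¹ - u) e_{(j,k)}` if `j < k`; for `j + k = 2n-1`,
`B e_{(j,2n-1-j)} = u e_{(2n-1-j,j)} + Σ_{k=j+1}^{2n-1} β_j^k e_{(2n-1-k,k)}`. -/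
def BD (n b d j k : ℕ) : FK :=
  if j + k + 1 = 2 * n then
    if b + d + 1 = 2 * n then
      if d = j then U else if j < d then betaD n j d else 0
    else 0
  else if j = k then (if b = j ∧ d = k then U⁻¹ else 0)
  else if k < j then (if b = k ∧ d = j then 1 else 0)
  else (if b = k ∧ d = j then (1 : FK) else 0) +
    (if b = j ∧ d = k then U⁻¹ - U else 0)

/-- The braiding matrix `B` of `D_n` as a matrix indexed by pairs `(j, k)`,
with `BmatD n (b, d) (j, k) = B^{bd}_{jk}`. -/
def BmatD (n : ℕ) :
    Matrix (Fin (2 * n) × Fin (2 * n)) (Fin (2 * n) × Fin (2 * n)) FK :=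
  Matrix.of fun p q => BD n p.1 p.2 q.1 q.2

/-- The matrix of the braiding `B` of `D_n` on its invariant subspace with
basis `{e_{(j, 2n-1-j)} : 0 ≤ j ≤ 2n-1}`. -/
def ND (n : ℕ) : Matrix (Fin (2 * n)) (Fin (2 * n)) FK :=
  Matrix.of fun k j => BD n k (2 * n - 1 - (k : ℕ)) j (2 * n - 1 - (j : ℕ))

/-! Row `k` of `N` is supported on the columns `j ≤ 2n-1-k`, with entry `u` at `j = 2n-1-k`,
so reversing the order of the rows makes `N` lower triangular with `u` on the diagonal, and
`det N = sign(rev) · u^{2n} = (-1)^n u^{2n}`. The diagonal entry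
`N_{k,k}` is the mixed coefficient `β_k^{2n-1-k} = (u - u⁻¹)u^{2n-2-2k} + (u⁻¹ - u)` for
`k < n` and `0` for `k ≥ n`; summing over `k < n`, the first summands telescope to
`u^{2n-1} - u⁻¹`. -/

lemma sub_inv_mul_zpow {K : Type*} [Field K] {x : K} (hx : x ≠ 0) (e : ℤ) :
    (x - x⁻¹) * x ^ e = x ^ (e + 1) - x ^ (e - 1) := by
  rw [zpow_add_one₀ hx, zpow_sub_one₀ hx]
  ring

lemma Fin.revPerm_succ (m : ℕ) :
    (Fin.revPerm : Equiv.Perm (Fin (m + 1))) =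
      finRotate (m + 1) *
        (Fin.revPerm : Equiv.Perm (Fin m)).viaFintypeEmbedding Fin.castSuccEmb := by
  ext x
  induction x using Fin.lastCases with
  | last =>
    rw [Equiv.Perm.mul_apply, Equiv.Perm.viaFintypeEmbedding_apply_notMem_range]
    · simp
    · rintro ⟨y, hy⟩
      exact (Fin.castSucc_lt_last y).ne hy
  | cast i =>
    rw [Equiv.Perm.mul_apply, ← Fin.coe_castSuccEmb, Equiv.Perm.viaFintypeEmbedding_apply_image]
    simp only [Fin.coe_castSuccEmb, Fin.revPerm_apply, finRotate_apply, Fin.rev_castSucc,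
      Fin.coeSucc_eq_succ]

lemma Fin.sign_revPerm (m : ℕ) :
    Equiv.Perm.sign (Fin.revPerm : Equiv.Perm (Fin m)) = (-1) ^ (m / 2) := by
  induction m with
  | zero => rfl
  | succ m ih =>
    rw [Fin.revPerm_succ, map_mul, sign_finRotate, Equiv.Perm.viaFintypeEmbedding_sign, ih,
      ← pow_add, Nat.add_sub_cancel, Int.units_pow_eq_pow_mod_two,
      Int.units_pow_eq_pow_mod_two _ ((m + 1) / 2)]
    congr 1
    obtain ⟨k, rfl | rfl⟩ := Nat.even_or_odd' m <;> omega

lemma U_ne_zero : U ≠ 0 :=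
  RatFunc.X_ne_zero

lemma ND_apply (n : ℕ) (k j : Fin (2 * n)) :
    ND n k j =
      if (j : ℕ) = 2 * n - 1 - k then U
      else if (j : ℕ) < 2 * n - 1 - k then betaD n j (2 * n - 1 - k)
      else 0 := by
  have := k.isLt
  have := j.isLt
  simp only [ND, Matrix.of_apply, BD]
  rw [if_pos (by omega), if_pos (by omega)]
  simp only [eq_comm]

lemma ND_apply_self (n : ℕ) (k : Fin (2 * n)) :
    ND n k k =
      if (k : ℕ) < n then (U - U⁻¹) * U ^ (2 * (n : ℤ) - 2 - 2 * k) + (U⁻¹ - U) else 0 := by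
  have := k.isLt
  rw [ND_apply, if_neg (by omega)]
  by_cases hk : (k : ℕ) < n
  · rw [if_pos (by omega), if_pos hk, betaD, if_neg (by omega), if_pos (by omega)]
    congr 3
    omega
  · rw [if_neg (by omega), if_neg hk]

lemma trace_ND (n : ℕ) :
    (ND n).trace = ((n : FK) - 1) * U⁻¹ - (n : FK) * U + U ^ (2 * (n : ℤ) - 1) := by
  have hdiag : ∀ k ∈ Finset.range n, (U - U⁻¹) * U ^ (2 * (n : ℤ) - 2 - 2 * k) + (U⁻¹ - U) =
      (U ^ (2 * (n : ℤ) - 1 - 2 * k) - U ^ (2 * (n : ℤ) - 1 - 2 * (k + 1 : ℕ))) + (U⁻¹ - U) := by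
    intro k _
    rw [sub_inv_mul_zpow U_ne_zero]
    congr 2 <;> push_cast <;> ring_nf
  have hsupport : (Finset.range (2 * n)).filter (· < n) = Finset.range n := by
    ext k
    simp only [Finset.mem_filter, Finset.mem_range]
    omega
  calc (ND n).trace
      = ∑ k ∈ Finset.range n, ((U - U⁻¹) * U ^ (2 * (n : ℤ) - 2 - 2 * k) + (U⁻¹ - U)) := by
        simp only [Matrix.trace, Matrix.diag_apply, ND_apply_self]
        rw [Fin.sum_univ_eq_sum_range (fun k : ℕ => if k < n then
          (U - U⁻¹) * U ^ (2 * (n : ℤ) - 2 - 2 * k) + (U⁻¹ - U) else 0), ← Finset.sum_filter,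
          hsupport]
    _ = U ^ (2 * (n : ℤ) - 1) - U ^ (-1 : ℤ) + n * (U⁻¹ - U) := by
        rw [Finset.sum_congr rfl hdiag, Finset.sum_add_distrib,
          Finset.sum_range_sub' (fun k : ℕ => U ^ (2 * (n : ℤ) - 1 - 2 * k)),
          Finset.sum_const, Finset.card_range, nsmul_eq_mul]
        push_cast
        ring_nf
    _ = ((n : FK) - 1) * U⁻¹ - (n : FK) * U + U ^ (2 * (n : ℤ) - 1) := by
        rw [zpow_neg_one]
        ring

lemma ND_submatrix_revPerm_isLowerTriangular (n : ℕ) :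
    ((ND n).submatrix Fin.revPerm id).IsLowerTriangular := by
  intro i j (hij : i < j)
  have := i.isLt
  simp only [Matrix.submatrix_apply, id, ND_apply, Fin.revPerm_apply, Fin.val_rev]
  rw [if_neg (by omega), if_neg (by omega)]

lemma ND_submatrix_revPerm_apply_self (n : ℕ) (i : Fin (2 * n)) :
    (ND n).submatrix Fin.revPerm id i i = U := by
  have := i.isLt
  simp only [Matrix.submatrix_apply, id, ND_apply, Fin.revPerm_apply, Fin.val_rev]
  rw [if_pos (by omega)]

lemma det_ND (n : ℕ) : (ND n).det = (-1) ^ n * U ^ (2 * n) := by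
  have hrev : ((ND n).submatrix Fin.revPerm id).det = U ^ (2 * n) := by
    rw [Matrix.det_of_isLowerTriangular _ (ND_submatrix_revPerm_isLowerTriangular n)]
    simp only [ND_submatrix_revPerm_apply_self, Finset.prod_const, Finset.card_univ,
      Fintype.card_fin]
  rw [Matrix.det_permute, Fin.sign_revPerm, Nat.mul_div_cancel_left n two_pos] at hrev
  rw [← hrev]
  push_cast
  rw [← mul_assoc, ← pow_add, ← two_mul, pow_mul, neg_one_sq, one_pow, one_mul]

theorem stmt12_general (n : ℕ) :
    (ND n).trace = ((n : FK) - 1) * U⁻¹ - (n : FK) * U + U ^ (2 * (n : ℤ) - 1) ∧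
    (ND n).det = (-1) ^ n * U ^ (2 * n) :=
  ⟨trace_ND n, det_ND n⟩

/-- Trace and determinant of the braiding matrix of `D_n` on the invariant
subspace with basis `{e_{(j,2n-1-j)}}`:
`Tr N = (n-1)u⁻¹ - n·u + u^{2n-1}` and `det N = (-1)^n u^{2n}`
(in `q = u²`: `Tr = (n-1)q^{-1/2} - n q^{1/2} + q^{(2n-1)/2}` and
`det = (-1)^n q^n`). -/
theorem stmt12 (n : ℕ) (hn : 2 ≤ n) :
    (ND n).trace = ((n : FK) - 1) * U⁻¹ - (n : FK) * U + U ^ (2 * (n : ℤ) - 1) ∧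
    (ND n).det = (-1) ^ n * U ^ (2 * n) :=
  stmt12_general n

end
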